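/- Generalized Mean Value Theorem: if f is continuous on [a,b], its Caputo derivative ᶜD^α f of order α ∈ (0,1] is continuous on (a,b], and the fundamental theorem I^α(ᶜD^α f)(t) = f(t) - f(a) holds, then for every t ∈ (a,b] there exists ξ ∈ [a,t] such that f(t) = f(a) + (1/Γ(α+1)) (ᶜD^α f)(ξ) (t-a)^α. -/
import Mathlib


/-- The Riemann–Liouville fractional integral of order `α` with base point `a`. -/
noncomputable def rlIntegral (a α : ℝ) (f : ℝ → ℝ) (t : ℝ) : ℝ :=
  (1 / Real.Gamma α) * ∫ τ in a..t, (t - τ) ^ (α - 1) * f τ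

/-- Generalized Mean Value Theorem: if `f` is continuous on `[a,b]`, its Caputo
derivative `g = ᶜD^α f` (extended continuously to `[a,b]`) is continuous there,
and the fundamental theorem `I^α g = f - f a` holds, then for each `t ∈ (a,b]`
there is `ξ ∈ [a,t]` with `f t = f a + (1/Γ(α+1)) g ξ (t-a)^α`. -/
theorem generalized_mean_value_theorem
    (a b α : ℝ) (hab : a < b) (hα0 : 0 < α) (hα1 : α ≤ 1)
    (f g : ℝ → ℝ)
    (hf : ContinuousOn f (Set.Icc a b))
    (hg : ContinuousOn g (Set.Icc a b))
    (hFT : ∀ t ∈ Set.Ioc a b, rlIntegral a α g t = f t - f a) :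
    ∀ t ∈ Set.Ioc a b, ∃ ξ ∈ Set.Icc a t,
      f t = f a + (1 / Real.Gamma (α + 1)) * g ξ * (t - a) ^ α := by
  intro t ht
  obtain ⟨hat, htb⟩ := ht
  have hIcc : Set.Icc a t ⊆ Set.Icc a b := Set.Icc_subset_Icc le_rfl htb
  have hg' : ContinuousOn g (Set.Icc a t) := hg.mono hIcc
  have hta : 0 < t - a := by linarith
  -- integrability of the weight
  have hw_int : IntervalIntegrable (fun τ => (t - τ) ^ (α - 1)) MeasureTheory.volume a t := by
    have h := (intervalIntegral.intervalIntegrable_rpow' (a := t - a) (b := t - t) (r := α - 1)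
      (by linarith)).comp_sub_left t
    simpa using h
  -- value of the weight integral
  have hW : (∫ τ in a..t, (t - τ) ^ (α - 1)) = (t - a) ^ α / α := by
    rw [intervalIntegral.integral_comp_sub_left (fun x => x ^ (α - 1)) t]
    simp only [sub_self]
    rw [integral_rpow (Or.inl (by linarith))]
    rw [Real.zero_rpow (by linarith : α - 1 + 1 ≠ 0)]
    norm_num
  have hWpos : 0 < (∫ τ in a..t, (t - τ) ^ (α - 1)) := by
    rw [hW]; positivity
  -- integrability of the product
  have hwg_int : IntervalIntegrable (fun τ => (t - τ) ^ (α - 1) * g τ)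
      MeasureTheory.volume a t := by
    apply hw_int.mul_continuousOn
    rwa [Set.uIcc_of_le hat.le]
  -- min and max of g on [a,t]
  obtain ⟨ξ₁, hξ₁m, hξ₁⟩ := isCompact_Icc.exists_isMinOn (Set.nonempty_Icc.2 hat.le) hg'
  obtain ⟨ξ₂, hξ₂m, hξ₂⟩ := isCompact_Icc.exists_isMaxOn (Set.nonempty_Icc.2 hat.le) hg'
  have hw_nonneg : ∀ τ ∈ Set.Icc a t, 0 ≤ (t - τ) ^ (α - 1) := fun τ hτ =>
    Real.rpow_nonneg (by linarith [hτ.2]) _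
  have hlow : g ξ₁ * (∫ τ in a..t, (t - τ) ^ (α - 1)) ≤
      ∫ τ in a..t, (t - τ) ^ (α - 1) * g τ := by
    rw [← intervalIntegral.integral_const_mul]
    apply intervalIntegral.integral_mono_on hat.le (hw_int.const_mul _) hwg_int
    intro τ hτ
    have := hξ₁ hτ
    have h0 := hw_nonneg τ hτ
    calc g ξ₁ * (t - τ) ^ (α - 1) ≤ g τ * (t - τ) ^ (α - 1) :=
          mul_le_mul_of_nonneg_right this h0
      _ = (t - τ) ^ (α - 1) * g τ := mul_comm _ _
  have hhigh : (∫ τ in a..t, (t - τ) ^ (α - 1) * g τ) ≤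
      g ξ₂ * (∫ τ in a..t, (t - τ) ^ (α - 1)) := by
    rw [← intervalIntegral.integral_const_mul]
    apply intervalIntegral.integral_mono_on hat.le hwg_int (hw_int.const_mul _)
    intro τ hτ
    have := hξ₂ hτ
    have h0 := hw_nonneg τ hτ
    calc (t - τ) ^ (α - 1) * g τ = g τ * (t - τ) ^ (α - 1) := mul_comm _ _
      _ ≤ g ξ₂ * (t - τ) ^ (α - 1) := mul_le_mul_of_nonneg_right this h0
  set c : ℝ := (∫ τ in a..t, (t - τ) ^ (α - 1) * g τ) / (∫ τ in a..t, (t - τ) ^ (α - 1)) with hc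
  have hc1 : g ξ₁ ≤ c := (le_div_iff₀ hWpos).2 hlow
  have hc2 : c ≤ g ξ₂ := (div_le_iff₀ hWpos).2 hhigh
  -- intermediate value theorem
  have hcont : ContinuousOn g (Set.uIcc ξ₁ ξ₂) := hg'.mono (Set.uIcc_subset_Icc hξ₁m hξ₂m)
  have hIVT := intermediate_value_uIcc hcont
  have hcmem : c ∈ Set.uIcc (g ξ₁) (g ξ₂) := Set.mem_uIcc.2 (Or.inl ⟨hc1, hc2⟩)
  obtain ⟨ξ, hξmem, hξ⟩ := hIVT hcmem
  refine ⟨ξ, Set.uIcc_subset_Icc hξ₁m hξ₂m hξmem, ?_⟩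
  -- conclude
  have hFT' := hFT t ⟨hat, htb⟩
  have hΓ : Real.Gamma (α + 1) = α * Real.Gamma α := Real.Gamma_add_one (ne_of_gt hα0)
  have hΓpos : 0 < Real.Gamma α := Real.Gamma_pos_of_pos hα0
  have hint : (∫ τ in a..t, (t - τ) ^ (α - 1) * g τ) = g ξ * ((t - a) ^ α / α) := by
    rw [← hW]
    rw [hξ, hc]
    field_simp
  unfold rlIntegral at hFT'
  rw [hint] at hFT'
  have : f t = f a + 1 / Real.Gamma α * (g ξ * ((t - a) ^ α / α)) := by linarith
  rw [this, hΓ]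
  field_simp
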